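/- There are exactly 7 subsets 𝔛 of ↺I^2_7 satisfying nc 𝔛 = 𝔛, namely {(1,3,5),(1,3,6),(1,4,6)}, {(1,3,6),(1,4,6),(2,4,6)}, {(1,4,6),(2,4,6),(2,4,7)}, {(2,4,6),(2,4,7),(2,5,7)}, {(2,4,7),(2,5,7),(3,5,7)}, {(2,5,7),(3,5,7),(1,3,5)} and {(3,5,7),(1,3,5),(1,3,6)}. These correspond to the cluster tilting subcategories of the 4-angulated cluster category of type A_2, i.e., to the weak cotorsion pairs of the form (𝒳, 𝒳). -/

import Mathlib

/-- Membership in the index set `↺I^r_m`: an `(r+1)`-tuple `(i_0, …, i_r)` of integers with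
`1 ≤ i_0`, `i_r ≤ m`, `i_{x+1} ≥ i_x + 2` for all `0 ≤ x ≤ r-1`, and `i_r + 2 ≤ i_0 + m`. -/
def InCyc (m r : ℕ) (x : Fin (r + 1) → ℤ) : Prop :=
  1 ≤ x 0 ∧ x (Fin.last r) ≤ (m : ℤ) ∧
    (∀ i : Fin r, x i.castSucc + 2 ≤ x i.succ) ∧
    x (Fin.last r) + 2 ≤ x 0 + (m : ℤ)

/-- `X` intertwines `Y`, written `X ≀ Y`: `x_0 < y_0 < x_1 < y_1 < ⋯ < x_r < y_r`. -/
def Intertwines (r : ℕ) (x y : Fin (r + 1) → ℤ) : Prop :=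
  (∀ i, x i < y i) ∧ ∀ i : Fin r, y i.castSucc < x i.succ

/-- `nc 𝔛 = { U ∈ ↺I^r_m : for every V ∈ 𝔛 neither U ≀ V nor V ≀ U }`. -/
def nc (m r : ℕ) (𝔛 : Set (Fin (r + 1) → ℤ)) : Set (Fin (r + 1) → ℤ) :=
  {u | InCyc m r u ∧ ∀ v ∈ 𝔛, ¬ Intertwines r u v ∧ ¬ Intertwines r v u}

/-!
`↺I^2_7` consists of exactly seven triples. Since `nc 𝔛 ⊆ ↺I^2_7`, every fixed point of `nc` is
one of its `2^7` subsets, and on a finite set `nc` is a filter of `↺I^2_7`; the classification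
is then a finite check.
-/

instance (r : ℕ) : DecidableRel (Intertwines r) := fun _ _ =>
  inferInstanceAs (Decidable (_ ∧ _))

def ncFinset (r : ℕ) (S s : Finset (Fin (r + 1) → ℤ)) : Finset (Fin (r + 1) → ℤ) :=
  S.filter fun u => ∀ v ∈ s, ¬ Intertwines r u v ∧ ¬ Intertwines r v u

section

variable {m r : ℕ}

lemma nc_subset_setOf_inCyc (𝔛 : Set (Fin (r + 1) → ℤ)) : nc m r 𝔛 ⊆ {u | InCyc m r u} :=
  fun _ hu => hu.1

lemma nc_coe_finset {S : Finset (Fin (r + 1) → ℤ)} (hS : {u | InCyc m r u} = ↑S)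
    (s : Finset (Fin (r + 1) → ℤ)) : nc m r ↑s = ↑(ncFinset r S s) := by
  ext u
  simp only [nc, ncFinset, Finset.coe_filter, Set.mem_ofPred_eq, Finset.mem_coe]
  rw [← Finset.mem_coe, ← hS, Set.mem_ofPred_eq]

lemma setOf_nc_eq_self {S : Finset (Fin (r + 1) → ℤ)} (hS : {u | InCyc m r u} = ↑S) :
    {𝔛 | nc m r 𝔛 = 𝔛} = (fun s : Finset (Fin (r + 1) → ℤ) => (s : Set (Fin (r + 1) → ℤ))) ''
      ↑(S.powerset.filter fun s => ncFinset r S s = s) := by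
  ext 𝔛
  simp only [Set.mem_ofPred_eq, Set.mem_image, Finset.coe_filter, Finset.mem_powerset]
  constructor
  · intro h𝔛
    have hfin : 𝔛.Finite := S.finite_toSet.subset (hS ▸ h𝔛 ▸ nc_subset_setOf_inCyc 𝔛)
    obtain ⟨s, rfl⟩ := hfin.exists_finset_coe
    have hs : ncFinset r S s = s := by exact_mod_cast (nc_coe_finset hS s).symm.trans h𝔛
    exact ⟨s, ⟨hs ▸ Finset.filter_subset _ _, hs⟩, rfl⟩
  · rintro ⟨s, ⟨-, hs⟩, rfl⟩
    rw [nc_coe_finset hS, hs]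

end

lemma inCyc_two_iff (m : ℕ) (a b c : ℤ) :
    InCyc m 2 ![a, b, c] ↔ 1 ≤ a ∧ a + 2 ≤ b ∧ b + 2 ≤ c ∧ c ≤ m ∧ c + 2 ≤ a + m := by
  simp only [InCyc, Fin.forall_fin_two]
  exact ⟨fun ⟨h1, h2, ⟨h3, h4⟩, h5⟩ => ⟨h1, h3, h4, h2, h5⟩,
    fun ⟨h1, h3, h4, h2, h5⟩ => ⟨h1, h2, ⟨h3, h4⟩, h5⟩⟩

def cycSevenTwo : Finset (Fin 3 → ℤ) :=
  {![1,3,5], ![1,3,6], ![1,4,6], ![2,4,6], ![2,4,7], ![2,5,7], ![3,5,7]}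

lemma setOf_inCyc_seven_two : {u | InCyc 7 2 u} = ↑cycSevenTwo := by
  ext u
  rw [Set.mem_ofPred_eq, Finset.mem_coe, cycSevenTwo]
  constructor
  · obtain ⟨a, b, c, rfl⟩ : ∃ a b c, u = ![a, b, c] :=
      ⟨u 0, u 1, u 2, by funext i; fin_cases i <;> rfl⟩
    rw [inCyc_two_iff]
    rintro ⟨ha, hab, hbc, hc, hca⟩
    have ha3 : a ≤ 3 := by omega
    have hb5 : b ≤ 5 := by omega
    interval_cases a <;> interval_cases b <;> interval_cases c <;> first | omega | decide
  · intro h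
    fin_cases h <;> simp only [inCyc_two_iff] <;> norm_num

/-- There are exactly 7 subsets `𝔛` of `↺I^2_7` with `nc 𝔛 = 𝔛`, namely the seven listed
ones; they correspond to the cluster tilting subcategories of the 4-angulated cluster category
of type `A_2`, i.e. to the weak cotorsion pairs of the form `(𝒳, 𝒳)`. -/
theorem nc_fixed_points_A2_d2 :
    {𝔛 : Set (Fin 3 → ℤ) | nc 7 2 𝔛 = 𝔛} =
      ({ {![1,3,5], ![1,3,6], ![1,4,6]},
         {![1,3,6], ![1,4,6], ![2,4,6]},
         {![1,4,6], ![2,4,6], ![2,4,7]},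
         {![2,4,6], ![2,4,7], ![2,5,7]},
         {![2,4,7], ![2,5,7], ![3,5,7]},
         {![2,5,7], ![3,5,7], ![1,3,5]},
         {![3,5,7], ![1,3,5], ![1,3,6]} } : Set (Set (Fin 3 → ℤ))) ∧
    Set.ncard {𝔛 : Set (Fin 3 → ℤ) | nc 7 2 𝔛 = 𝔛} = 7 := by
  have hfixed : (cycSevenTwo.powerset.filter fun s => ncFinset 2 cycSevenTwo s = s) =
      { {![1,3,5], ![1,3,6], ![1,4,6]},
        {![1,3,6], ![1,4,6], ![2,4,6]},
        {![1,4,6], ![2,4,6], ![2,4,7]},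
        {![2,4,6], ![2,4,7], ![2,5,7]},
        {![2,4,7], ![2,5,7], ![3,5,7]},
        {![2,5,7], ![3,5,7], ![1,3,5]},
        {![3,5,7], ![1,3,5], ![1,3,6]} } := by
    decide +kernel
  rw [setOf_nc_eq_self setOf_inCyc_seven_two, hfixed]
  refine ⟨by simp only [Finset.coe_insert, Finset.coe_singleton, Set.image_insert_eq,
    Set.image_singleton], ?_⟩
  rw [Set.ncard_image_of_injective _ Finset.coe_injective, Set.ncard_coe_finset]
  decide
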